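/- For every integer m ≥ 1 there exists c_0 > 0 such that for all c ≥ c_0 the following hold, where S = {z ∈ ℂ : Re z = c and (2m−1)π ≤ Im z ≤ (2m+1)π}: (i) every z ∈ S satisfies |f(z) − exp(z)| ≤ (p−1)·exp((2m+1)π·sin(2π/p))·exp(c·cos(2π/p)), and consequently ||f(z)| − e^c| ≤ (p−1)·exp((2m+1)π·sin(2π/p))·exp(c·cos(2π/p)); and (ii) there exist z_+, z_− ∈ S such that f(z_+) is purely imaginary with Im f(z_+) > 0 and f(z_−) is purely imaginary with Im f(z_−) < 0. -/

import Mathlib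

open Complex Filter Set

/-- The function `f(z) = ∑_{k=0}^{p-1} exp(ω^k z)` with `ω = exp(2πi/p)`. -/
noncomputable def f (p : ℕ) (z : ℂ) : ℂ :=
  ∑ k ∈ Finset.range p, Complex.exp (Complex.exp (2 * Real.pi * Complex.I / p) ^ k * z)

/-! For `1 ≤ k < p` we have `‖exp (ω^k z)‖ = exp (Re (ω^k z))`, and on the segment
`Re (ω^k z) ≤ c cos (2π/p) + M sin (2π/p)` with `M = (2m+1)π` once `c` is large, because
`cos (2πk/p) ≤ cos (2π/p)`. Summing over `k` gives (i). As `cos (2π/p) < 1`, this error is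
eventually below `e^c / 2`, so `f (c + iy)` stays within `e^c / 2` of `e^c e^{iy}`: its real part
changes sign between `y = 2mπ` and `y = 2mπ ± π`, and wherever it vanishes `|cos y| ≤ 1/2`
forces `|sin y| > 1/2`, which fixes the sign of the imaginary part. -/

open scoped Real

lemma Real.cos_le_cos_of_mem_Icc {a x : ℝ} (ha : 0 ≤ a) (hx : x ∈ Icc a (2 * π - a)) :
    Real.cos x ≤ Real.cos a := by
  rcases le_total x π with hxπ | hπx
  · exact Real.cos_le_cos_of_nonneg_of_le_pi ha hxπ hx.1
  · rw [← Real.cos_two_pi_sub]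
    exact Real.cos_le_cos_of_nonneg_of_le_pi ha (by linarith) (by linarith [hx.2])

lemma cos_two_pi_mul_div_le {p k : ℕ} (hk : 1 ≤ k) (hkp : k < p) :
    Real.cos (2 * π * k / p) ≤ Real.cos (2 * π / p) := by
  have hk' : (1 : ℝ) ≤ k := by exact_mod_cast hk
  have hkp' : (k : ℝ) + 1 ≤ p := by exact_mod_cast hkp
  refine Real.cos_le_cos_of_mem_Icc (by positivity) ⟨?_, ?_⟩
  · exact div_le_div_of_nonneg_right (le_mul_of_one_le_right (by positivity) hk') p.cast_nonneg
  · rw [le_sub_iff_add_le, ← add_div, div_le_iff₀ (by linarith)]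
    nlinarith [Real.pi_pos]

lemma cos_two_pi_div_lt_one {p : ℕ} (hp : 2 ≤ p) : Real.cos (2 * π / p) < 1 := by
  have hp' : (2 : ℝ) ≤ p := by exact_mod_cast hp
  refine (Real.cos_le_one _).lt_of_ne fun h => ?_
  have hpos : 0 < 2 * π / p := by positivity
  have := (Real.cos_eq_one_iff_of_lt_of_lt (by linarith [Real.pi_pos]) ?_).1 h
  · linarith
  · rw [div_lt_iff₀ (by linarith)]; nlinarith [Real.pi_pos]

lemma exp_two_pi_I_div_pow (p k : ℕ) :
    exp (2 * π * I / p) ^ k = exp ((2 * π * k / p : ℝ) * I) := by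
  rw [← exp_nat_mul]
  push_cast
  ring_nf

lemma re_exp_ofReal_mul_I_mul (θ : ℝ) (z : ℂ) :
    (exp (θ * I) * z).re = Real.cos θ * z.re - Real.sin θ * z.im := by
  rw [mul_re, exp_ofReal_mul_I_re, exp_ofReal_mul_I_im]

/-- If `cos θ = cos α` then `sin θ = ± sin α`; otherwise `cos θ < cos α` and the gap absorbs
the `sin θ * z.im` term once `c` is large. -/
lemma eventually_re_exp_ofReal_mul_I_mul_le {θ α : ℝ} (hcos : Real.cos θ ≤ Real.cos α)
    (hsin : 0 ≤ Real.sin α) (M : ℝ) :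
    ∀ᶠ c in atTop, ∀ z : ℂ, z.re = c → |z.im| ≤ M →
      (exp (θ * I) * z).re ≤ c * Real.cos α + M * Real.sin α := by
  have hmul {y s : ℝ} (hs : |Real.sin θ| ≤ s) (hy : |y| ≤ M) :
      -(Real.sin θ * y) ≤ s * M := calc
    -(Real.sin θ * y) ≤ |Real.sin θ| * |y| := by rw [← abs_mul]; exact neg_le_abs _
    _ ≤ s * M := mul_le_mul hs hy (abs_nonneg _) ((abs_nonneg _).trans hs)
  rcases le_or_gt |Real.sin θ| (Real.sin α) with hθ | hθ
  · filter_upwards [eventually_ge_atTop 0] with c hc z hre him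
    have := hmul hθ him
    rw [re_exp_ofReal_mul_I_mul, hre]
    nlinarith
  · have hlt : Real.cos θ < Real.cos α := by
      refine hcos.lt_of_ne fun h => ?_
      have hsq : Real.sin α ^ 2 < Real.sin θ ^ 2 := by
        simpa only [sq_abs] using pow_lt_pow_left₀ hθ hsin two_ne_zero
      have hθ₁ := Real.sin_sq_add_cos_sq θ
      rw [h] at hθ₁
      linarith [Real.sin_sq_add_cos_sq α]
    have hgap : Tendsto (fun c => c * (Real.cos α - Real.cos θ)) atTop atTop :=
      tendsto_id.atTop_mul_const (sub_pos.2 hlt)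
    filter_upwards [hgap.eventually_ge_atTop (M * (1 - Real.sin α)), eventually_ge_atTop 0]
      with c hc hc₀ z hre him
    have := hmul (Real.abs_sin_le_one θ) him
    rw [re_exp_ofReal_mul_I_mul, hre]
    nlinarith

lemma f_sub_exp_eq_sum {p : ℕ} (hp : 0 < p) (z : ℂ) :
    f p z - exp z = ∑ k ∈ Finset.Ico 1 p, exp (exp (2 * π * I / p) ^ k * z) := by
  rw [f, Finset.range_eq_Ico, Finset.sum_eq_sum_Ico_succ_bot hp]
  simp

lemma continuous_f (p : ℕ) : Continuous (f p) := by
  unfold f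
  fun_prop

lemma eventually_norm_f_sub_exp_le {p : ℕ} (hp : 0 < p) (M : ℝ) :
    ∀ᶠ c in atTop, ∀ z : ℂ, z.re = c → |z.im| ≤ M →
      ‖f p z - exp z‖ ≤ ((p : ℝ) - 1) * Real.exp (M * Real.sin (2 * π / p)) *
        Real.exp (c * Real.cos (2 * π / p)) := by
  have hterm : ∀ k ∈ Finset.Ico 1 p, ∀ᶠ c in atTop, ∀ z : ℂ, z.re = c → |z.im| ≤ M →
      ‖exp (exp (2 * π * I / p) ^ k * z)‖
        ≤ Real.exp (c * Real.cos (2 * π / p) + M * Real.sin (2 * π / p)) := by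
    intro k hk
    obtain ⟨hk₁, hkp⟩ := Finset.mem_Ico.1 hk
    have hp₂ : (2 : ℝ) ≤ p := by exact_mod_cast hk₁.trans_lt hkp
    have hsin : 0 ≤ Real.sin (2 * π / p) := Real.sin_nonneg_of_nonneg_of_le_pi (by positivity)
      (by rw [div_le_iff₀ (by linarith)]; nlinarith [Real.pi_pos])
    filter_upwards [eventually_re_exp_ofReal_mul_I_mul_le (cos_two_pi_mul_div_le hk₁ hkp) hsin M]
      with c hc z hre him
    rw [exp_two_pi_I_div_pow, norm_exp]
    exact Real.exp_le_exp.2 (hc z hre him)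
  filter_upwards [(eventually_all_finset _).2 hterm] with c hc z hre him
  rw [f_sub_exp_eq_sum hp]
  refine (norm_sum_le_of_le _ fun k hk => hc k hk z hre him).trans_eq ?_
  rw [Finset.sum_const, Nat.card_Ico, nsmul_eq_mul, Nat.cast_sub (by omega), Real.exp_add]
  push_cast
  ring

lemma eventually_mul_exp_le_half_exp {q : ℝ} (hq : q < 1) (A : ℝ) :
    ∀ᶠ c in atTop, A * Real.exp (c * q) ≤ Real.exp c / 2 := by
  have hgap : Tendsto (fun c => c - c * q) atTop atTop := by
    simpa [mul_one_sub] using tendsto_id.atTop_mul_const (sub_pos.2 hq)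
  filter_upwards [((Real.isLittleO_exp_comp_exp_comp.2 hgap).const_mul_left A).def
    (by norm_num : (0 : ℝ) < 1 / 2)] with c hc
  simp only [norm_mul, Real.norm_eq_abs, Real.abs_exp] at hc
  linarith [mul_le_mul_of_nonneg_right (le_abs_self A) (Real.exp_pos (c * q)).le]

lemma abs_re_sub_le_of_norm_sub_le {w : ℂ} {r y ε : ℝ} (h : ‖w - r * exp (y * I)‖ ≤ ε) :
    |w.re - r * Real.cos y| ≤ ε := by
  simpa [exp_ofReal_mul_I_re] using (abs_re_le_norm _).trans h

lemma abs_im_sub_le_of_norm_sub_le {w : ℂ} {r y ε : ℝ} (h : ‖w - r * exp (y * I)‖ ≤ ε) :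
    |w.im - r * Real.sin y| ≤ ε := by
  simpa [exp_ofReal_mul_I_im] using (abs_im_le_norm _).trans h

lemma half_lt_abs_sin_of_re_eq_zero {w : ℂ} {r y : ℝ} (hr : 0 < r)
    (h : ‖w - r * exp (y * I)‖ ≤ r / 2) (hre : w.re = 0) : 1 / 2 < |Real.sin y| := by
  have hcos := abs_re_sub_le_of_norm_sub_le h
  rw [hre, zero_sub, abs_neg, abs_mul, abs_of_pos hr] at hcos
  have hcos' : Real.cos y ^ 2 ≤ (1 / 2) ^ 2 := by
    rw [← sq_abs]
    exact pow_le_pow_left₀ (abs_nonneg _) (by nlinarith) 2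
  have hsin : (1 / 2) ^ 2 < Real.sin y ^ 2 := by linarith [Real.sin_sq_add_cos_sq y]
  simpa using sq_lt_sq.1 hsin

lemma im_pos_of_re_eq_zero {w : ℂ} {r y : ℝ} (hr : 0 < r)
    (h : ‖w - r * exp (y * I)‖ ≤ r / 2) (hre : w.re = 0) (hy : 0 ≤ Real.sin y) : 0 < w.im := by
  have hsin := half_lt_abs_sin_of_re_eq_zero hr h hre
  rw [abs_of_nonneg hy] at hsin
  nlinarith [(abs_le.1 (abs_im_sub_le_of_norm_sub_le h)).1]

lemma im_neg_of_re_eq_zero {w : ℂ} {r y : ℝ} (hr : 0 < r)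
    (h : ‖w - r * exp (y * I)‖ ≤ r / 2) (hre : w.re = 0) (hy : Real.sin y ≤ 0) : w.im < 0 := by
  have hsin := half_lt_abs_sin_of_re_eq_zero hr h hre
  rw [abs_of_nonpos hy] at hsin
  nlinarith [(abs_le.1 (abs_im_sub_le_of_norm_sub_le h)).2]

lemma Real.sin_sub_of_cos_eq_one {t : ℝ} (ht : Real.cos t = 1) (y : ℝ) :
    Real.sin (y - t) = Real.sin y := by
  rw [Real.sin_sub, ht, Real.sin_eq_zero_iff_cos_eq.2 (Or.inl ht)]
  ring

lemma exists_re_eq_zero_im_pos_and_neg {w : ℝ → ℂ} {r t : ℝ} (hr : 0 < r)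
    (ht : Real.cos t = 1) (hw : ContinuousOn w (Icc (t - π) (t + π)))
    (hclose : ∀ y ∈ Icc (t - π) (t + π), ‖w y - r * exp (y * I)‖ ≤ r / 2) :
    (∃ y ∈ Icc (t - π) (t + π), (w y).re = 0 ∧ 0 < (w y).im) ∧
      ∃ y ∈ Icc (t - π) (t + π), (w y).re = 0 ∧ (w y).im < 0 := by
  have hπ := Real.pi_pos
  have hre y (hy : y ∈ Icc (t - π) (t + π)) :=
    abs_le.1 (abs_re_sub_le_of_norm_sub_le (hclose y hy))
  have hmid : 0 ≤ (w t).re := by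
    have := hre t ⟨by linarith, by linarith⟩
    rw [ht] at this; linarith
  have hleft : (w (t - π)).re ≤ 0 := by
    have := hre (t - π) ⟨le_rfl, by linarith⟩
    rw [Real.cos_sub_pi, ht] at this; linarith
  have hright : (w (t + π)).re ≤ 0 := by
    have := hre (t + π) ⟨by linarith, le_rfl⟩
    rw [Real.cos_add_pi, ht] at this; linarith
  have hcont := continuous_re.comp_continuousOn hw
  obtain ⟨yp, hyp, hyp₀⟩ := intermediate_value_Icc' (by linarith)
    (hcont.mono (Icc_subset_Icc_left (by linarith))) ⟨hright, hmid⟩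
  obtain ⟨ym, hym, hym₀⟩ := intermediate_value_Icc (by linarith)
    (hcont.mono (Icc_subset_Icc_right (by linarith))) ⟨hleft, hmid⟩
  have hyp' : yp ∈ Icc (t - π) (t + π) := ⟨by linarith [hyp.1], hyp.2⟩
  have hym' : ym ∈ Icc (t - π) (t + π) := ⟨hym.1, by linarith [hym.2]⟩
  refine ⟨⟨yp, hyp', hyp₀, im_pos_of_re_eq_zero hr (hclose yp hyp') hyp₀ ?_⟩,
    ⟨ym, hym', hym₀, im_neg_of_re_eq_zero hr (hclose ym hym') hym₀ ?_⟩⟩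
  · rw [← Real.sin_sub_of_cos_eq_one ht]
    exact Real.sin_nonneg_of_nonneg_of_le_pi (by linarith [hyp.1]) (by linarith [hyp.2])
  · rw [← Real.sin_sub_of_cos_eq_one ht]
    exact Real.sin_nonpos_of_nonpos_of_neg_pi_le (by linarith [hym.2]) (by linarith [hym.1])

theorem image_of_vertical_segment_general (p : ℕ) (hp : 3 ≤ p) (m : ℕ) :
    ∃ c₀ : ℝ, 0 < c₀ ∧ ∀ c : ℝ, c₀ ≤ c →
      (∀ z : ℂ, z.re = c → (2 * (m : ℝ) - 1) * Real.pi ≤ z.im →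
        z.im ≤ (2 * (m : ℝ) + 1) * Real.pi →
        ‖f p z - Complex.exp z‖ ≤
          ((p : ℝ) - 1) * Real.exp ((2 * (m : ℝ) + 1) * Real.pi * Real.sin (2 * Real.pi / p)) *
            Real.exp (c * Real.cos (2 * Real.pi / p)) ∧
        |‖f p z‖ - Real.exp c| ≤
          ((p : ℝ) - 1) * Real.exp ((2 * (m : ℝ) + 1) * Real.pi * Real.sin (2 * Real.pi / p)) *
            Real.exp (c * Real.cos (2 * Real.pi / p))) ∧
      (∃ zp : ℂ, zp.re = c ∧ (2 * (m : ℝ) - 1) * Real.pi ≤ zp.im ∧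
        zp.im ≤ (2 * (m : ℝ) + 1) * Real.pi ∧ (f p zp).re = 0 ∧ 0 < (f p zp).im) ∧
      (∃ zm : ℂ, zm.re = c ∧ (2 * (m : ℝ) - 1) * Real.pi ≤ zm.im ∧
        zm.im ≤ (2 * (m : ℝ) + 1) * Real.pi ∧ (f p zm).re = 0 ∧ (f p zm).im < 0) := by
  obtain ⟨c₁, hc₁⟩ := eventually_atTop.1
    ((eventually_norm_f_sub_exp_le (p := p) (by omega) ((2 * (m : ℝ) + 1) * π)).and
      (eventually_mul_exp_le_half_exp (cos_two_pi_div_lt_one (p := p) (by omega))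
        (((p : ℝ) - 1) * Real.exp ((2 * (m : ℝ) + 1) * π * Real.sin (2 * π / p)))))
  refine ⟨max c₁ 1, by positivity, fun c hc => ?_⟩
  obtain ⟨hnear, hsmall⟩ := hc₁ c (le_of_max_le_left hc)
  have hseg (z : ℂ) (hre : z.re = c) (hlo : (2 * (m : ℝ) - 1) * π ≤ z.im)
      (hhi : z.im ≤ (2 * (m : ℝ) + 1) * π) :=
    hnear z hre (abs_le.2 ⟨by nlinarith [Real.pi_pos], hhi⟩)
  have hIcc : Icc (2 * m * π - π) (2 * m * π + π) =
      Icc ((2 * (m : ℝ) - 1) * π) ((2 * m + 1) * π) := by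
    ring_nf
  obtain ⟨⟨yp, hyp, hp₀, hp₁⟩, ⟨ym, hym, hm₀, hm₁⟩⟩ :=
    exists_re_eq_zero_im_pos_and_neg (w := fun y : ℝ => f p (c + y * I)) (t := 2 * m * π)
      (Real.exp_pos c)
      (by rw [show 2 * (m : ℝ) * π = m * (2 * π) by ring]; exact Real.cos_nat_mul_two_pi m)
      ((continuous_f p).comp (by fun_prop)).continuousOn
      (hIcc ▸ fun y hy => by
        rw [ofReal_exp, ← exp_add]
        exact (hseg _ (by simp) (by simpa using hy.1) (by simpa using hy.2)).trans hsmall)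
  refine ⟨fun z hre hlo hhi => ⟨hseg z hre hlo hhi, ?_⟩, ⟨c + yp * I, by simp, ?_⟩,
    ⟨c + ym * I, by simp, ?_⟩⟩
  · have := abs_norm_sub_norm_le (f p z) (exp z)
    rw [norm_exp, hre] at this
    exact this.trans (hseg z hre hlo hhi)
  · rw [hIcc] at hyp
    simpa using ⟨hyp.1, hyp.2, hp₀, hp₁⟩
  · rw [hIcc] at hym
    simpa using ⟨hym.1, hym.2, hm₀, hm₁⟩

theorem image_of_vertical_segment (p : ℕ) (hp : 3 ≤ p) (m : ℕ) (hm : 1 ≤ m) :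
    ∃ c₀ : ℝ, 0 < c₀ ∧ ∀ c : ℝ, c₀ ≤ c →
      (∀ z : ℂ, z.re = c → (2 * (m : ℝ) - 1) * Real.pi ≤ z.im →
        z.im ≤ (2 * (m : ℝ) + 1) * Real.pi →
        ‖f p z - Complex.exp z‖ ≤
          ((p : ℝ) - 1) * Real.exp ((2 * (m : ℝ) + 1) * Real.pi * Real.sin (2 * Real.pi / p)) *
            Real.exp (c * Real.cos (2 * Real.pi / p)) ∧
        |‖f p z‖ - Real.exp c| ≤
          ((p : ℝ) - 1) * Real.exp ((2 * (m : ℝ) + 1) * Real.pi * Real.sin (2 * Real.pi / p)) *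
            Real.exp (c * Real.cos (2 * Real.pi / p))) ∧
      (∃ zp : ℂ, zp.re = c ∧ (2 * (m : ℝ) - 1) * Real.pi ≤ zp.im ∧
        zp.im ≤ (2 * (m : ℝ) + 1) * Real.pi ∧ (f p zp).re = 0 ∧ 0 < (f p zp).im) ∧
      (∃ zm : ℂ, zm.re = c ∧ (2 * (m : ℝ) - 1) * Real.pi ≤ zm.im ∧
        zm.im ≤ (2 * (m : ℝ) + 1) * Real.pi ∧ (f p zm).re = 0 ∧ (f p zm).im < 0) :=
  image_of_vertical_segment_general p hp m
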